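/- If the initial field is linear, u_0(x) = α + β(x − x_j), then the projection ⟨z_j, u_0⟩ with the leading projection vector z_j reproduces the grid value exactly: ⟨z_j, u_0⟩ = α = u_0(x_j). -/

import Mathlib

/-!
Substituting `x = x_k + h ξ` on each element `k ∈ {j-1, j, j+1}` turns `⟨z_j, u₀⟩` into a single
integral over `ξ ∈ [-1/2, 1/2]`, whose integrand is identically `α`: the three pieces of `z_j`
sum to one and their first moments about `x_j` cancel pointwise.
-/

open intervalIntegral

theorem intervalIntegral.integral_centered_eq_mul (f : ℝ → ℝ) (c h : ℝ) :
    ∫ x in (c - h/2)..(c + h/2), f x = h * ∫ ξ in (-1/2 : ℝ)..(1/2), f (c + h * ξ) := by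
  rw [← smul_eq_mul, smul_integral_comp_add_mul]
  ring_nf

theorem leading_pieces_reproduce_linear (a b ξ : ℝ) :
    (7/6 - ξ^2) * (a + b * ξ) + (-1/12 + ξ/2 + ξ^2/2) * (a + b * (ξ - 1))
      + (-1/12 - ξ/2 + ξ^2/2) * (a + b * (ξ + 1)) = a := by
  ring

/-- Projecting a linear initial field `u₀(x) = α + β(x − x_j)` with the leading
projection vector `z_j` reproduces the grid value: `⟨z_j, u₀⟩ = α`. -/
theorem stmt_6 (h α β : ℝ) (hh : 0 < h) (j : ℤ) :
    (1/h) * ((∫ x in ((j : ℝ) * h - h/2)..((j : ℝ) * h + h/2),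
        (7/6 - ((x - (j : ℝ) * h)/h)^2) * (α + β * (x - (j : ℝ) * h)))
      + (∫ x in (((j : ℝ) - 1) * h - h/2)..(((j : ℝ) - 1) * h + h/2),
        (-1/12 + ((x - ((j : ℝ) - 1) * h)/h)/2 + ((x - ((j : ℝ) - 1) * h)/h)^2/2)
          * (α + β * (x - (j : ℝ) * h)))
      + (∫ x in (((j : ℝ) + 1) * h - h/2)..(((j : ℝ) + 1) * h + h/2),
        (-1/12 - ((x - ((j : ℝ) + 1) * h)/h)/2 + ((x - ((j : ℝ) + 1) * h)/h)^2/2)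
          * (α + β * (x - (j : ℝ) * h))))
    = α := by
  have hh0 : h ≠ 0 := hh.ne'
  simp only [integral_centered_eq_mul]
  rw [← mul_add, ← mul_add, ← integral_add, ← integral_add, integral_congr (g := fun _ => α)]
  · norm_num [hh0]
  · intro ξ _
    have hpoint := leading_pieces_reproduce_linear α (β * h) ξ
    field_simp
    linear_combination hpoint
  all_goals exact (Continuous.intervalIntegrable (by fun_prop) _ _)
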